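/- arXiv:2006.04797 — 5 statements merged into one kernel-verified Lean document; each statement's English description precedes it below -/
import Mathlib

section
/- Let (X, F, 𝔅, ν) be a Renyi space and fix B₀ ∈ 𝔅. For B ∈ 𝔅 define m(B) = ν(B | B₀ ∪ B)/ν(B₀ | B₀ ∪ B) (the denominator is positive since B₀ ⊆ B₀ ∪ B ∈ 𝔅). Then for all B₁, B₂ ∈ 𝔅 and every measurable set A with A ⊆ B₁ ∩ B₂, one has ν(A | B₁)·m(B₁) = ν(A | B₂)·m(B₂); i.e., the extension μ(A) := ν(A | B)·m(B) for measurable A ⊆ B ∈ 𝔅 does not depend on the choice of B. -/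
open MeasureTheory
open scoped ENNReal

/-- A Renyi (conditional probability) space on a measurable space `X`: a bunch
`𝔅` of measurable sets together with probability measures `cond B = ν(· | B)`
for `B ∈ 𝔅`, satisfying the Renyi axioms. -/
structure RenyiSpace (X : Type*) [MeasurableSpace X] where
  bunch : Set (Set X)
  cond : Set X → Measure X
  bunch_measurableSet : ∀ B ∈ bunch, MeasurableSet B
  bunch_union : ∀ B₁ ∈ bunch, ∀ B₂ ∈ bunch, B₁ ∪ B₂ ∈ bunch
  bunch_cover : ∃ B : ℕ → Set X, (∀ i, B i ∈ bunch) ∧ (⋃ i, B i) = Set.univ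
  empty_not_mem : ∅ ∉ bunch
  isProbabilityMeasure : ∀ B ∈ bunch, IsProbabilityMeasure (cond B)
  pos : ∀ B₁ ∈ bunch, ∀ B₂ ∈ bunch, B₁ ⊆ B₂ → 0 < cond B₂ B₁
  renyi : ∀ B₁ ∈ bunch, ∀ B₂ ∈ bunch, B₁ ⊆ B₂ →
    ∀ A : Set X, MeasurableSet A →
      cond B₁ A = cond B₂ (A ∩ B₁) / cond B₂ B₁

/-- The normalizing function `m(B) = ν(B | B₀ ∪ B) / ν(B₀ | B₀ ∪ B)` used in
the construction of the measure generated by a Renyi space. -/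
noncomputable def RenyiSpace.mFun {X : Type*} [MeasurableSpace X]
    (R : RenyiSpace X) (B₀ B : Set X) : ℝ≥0∞ :=
  R.cond (B₀ ∪ B) B / R.cond (B₀ ∪ B) B₀

/-!
Every conditional measure `ν(· | B)` is a rescaling of `ν(· | C)` for any larger `C ∈ 𝔅`, so
both sides of the identity can be computed in the single measure `ν(· | C)` with
`C = B₀ ∪ B₁ ∪ B₂`, where each equals `ν(A | C) / ν(B₀ | C)`.
-/

namespace RenyiSpace

variable {X : Type*} [MeasurableSpace X] (R : RenyiSpace X)

lemma cond_ne_top {C : Set X} (hC : C ∈ R.bunch) (A : Set X) : R.cond C A ≠ ∞ :=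
  haveI := R.isProbabilityMeasure C hC
  measure_ne_top _ A

lemma cond_eq_div_of_subset {B C : Set X} (hB : B ∈ R.bunch) (hC : C ∈ R.bunch) (hBC : B ⊆ C)
    {A : Set X} (hA : MeasurableSet A) (hAB : A ⊆ B) :
    R.cond B A = R.cond C A / R.cond C B := by
  rw [R.renyi B hB C hC hBC A hA, Set.inter_eq_self_of_subset_left hAB]

lemma mFun_eq_div {B₀ B C : Set X} (hB₀ : B₀ ∈ R.bunch) (hB : B ∈ R.bunch) (hC : C ∈ R.bunch)
    (hBC : B₀ ∪ B ⊆ C) :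
    R.mFun B₀ B = R.cond C B / R.cond C B₀ := by
  have hU : B₀ ∪ B ∈ R.bunch := R.bunch_union B₀ hB₀ B hB
  have hU_pos : R.cond C (B₀ ∪ B) ≠ 0 := (R.pos _ hU C hC hBC).ne'
  rw [mFun, R.cond_eq_div_of_subset hU hC hBC (R.bunch_measurableSet B hB) Set.subset_union_right,
    R.cond_eq_div_of_subset hU hC hBC (R.bunch_measurableSet B₀ hB₀) Set.subset_union_left,
    div_eq_mul_inv (R.cond C B), div_eq_mul_inv (R.cond C B₀)]
  exact ENNReal.mul_div_mul_right _ _ (ENNReal.inv_ne_zero.2 (R.cond_ne_top hC _))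
    (ENNReal.inv_ne_top.2 hU_pos)

lemma cond_mul_mFun_eq_div {B₀ B C : Set X} (hB₀ : B₀ ∈ R.bunch) (hB : B ∈ R.bunch)
    (hC : C ∈ R.bunch) (hBC : B₀ ∪ B ⊆ C) {A : Set X} (hA : MeasurableSet A) (hAB : A ⊆ B) :
    R.cond B A * R.mFun B₀ B = R.cond C A / R.cond C B₀ := by
  have hB_pos : R.cond C B ≠ 0 := (R.pos B hB C hC (Set.subset_union_right.trans hBC)).ne'
  rw [R.cond_eq_div_of_subset hB hC (Set.subset_union_right.trans hBC) hA hAB,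
    R.mFun_eq_div hB₀ hB hC hBC, ENNReal.mul_comm_div, ENNReal.div_right_comm,
    ENNReal.div_self hB_pos (R.cond_ne_top hC B), mul_one_div]

end RenyiSpace

/-- In a Renyi space, with `B₀ ∈ 𝔅` fixed and
`m(B) = ν(B | B₀ ∪ B) / ν(B₀ | B₀ ∪ B)`, for all `B₁, B₂ ∈ 𝔅` and every
measurable `A ⊆ B₁ ∩ B₂` one has `ν(A | B₁)·m(B₁) = ν(A | B₂)·m(B₂)`: the
extension `μ(A) := ν(A | B)·m(B)` does not depend on the choice of `B`. -/
theorem stmt_11 {X : Type*} [MeasurableSpace X] (R : RenyiSpace X)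
    (B₀ : Set X) (hB₀ : B₀ ∈ R.bunch) :
    ∀ B₁ ∈ R.bunch, ∀ B₂ ∈ R.bunch,
      ∀ A : Set X, MeasurableSet A → A ⊆ B₁ ∩ B₂ →
        R.cond B₁ A * R.mFun B₀ B₁ = R.cond B₂ A * R.mFun B₀ B₂ := by
  intro B₁ hB₁ B₂ hB₂ A hA hAB
  have hC : B₀ ∪ B₁ ∪ B₂ ∈ R.bunch := R.bunch_union _ (R.bunch_union B₀ hB₀ B₁ hB₁) B₂ hB₂
  have h₁ : B₀ ∪ B₁ ⊆ B₀ ∪ B₁ ∪ B₂ := Set.subset_union_left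
  have h₂ : B₀ ∪ B₂ ⊆ B₀ ∪ B₁ ∪ B₂ := Set.union_subset_union_left _ Set.subset_union_left
  rw [R.cond_mul_mFun_eq_div hB₀ hB₁ hC h₁ hA (hAB.trans Set.inter_subset_left),
    R.cond_mul_mFun_eq_div hB₀ hB₂ hC h₂ hA (hAB.trans Set.inter_subset_right)]
end

section
/- (Structure theorem, uniqueness.) Let 𝔅 be a bunch in a measurable space (X, F), and let μ and μ′ be σ-finite measures on (X, F) such that every B ∈ 𝔅 is admissible for both (0 < μ(B) < ∞ and 0 < μ′(B) < ∞) and μ(A ∩ B)/μ(B) = μ′(A ∩ B)/μ′(B) for all A ∈ F and all B ∈ 𝔅. Then there exists c ∈ (0,∞) with μ′ = c·μ; i.e., the σ-finite measure generated by a Renyi space is unique up to a positive multiplicative constant. -/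
open MeasureTheory
open scoped ENNReal

/-!
Equality of the conditional probabilities given an admissible `B` says exactly that
`μ'|_B = (μ' B / μ B) • μ|_B`. Two members `D`, `B₀` of the bunch both lie in `D ∪ B₀`, which is
again in the bunch, so the proportionality constant on `D` is the one on `B₀`. The countable cover
then glues the restrictions together: `μ' = (μ' B₀ / μ B₀) • μ`.
-/

namespace MeasureTheory.Measure

variable {X : Type*} [MeasurableSpace X] {μ μ' : Measure X} {B D E : Set X}

theorem restrict_eq_smul_restrict_of_div_eq (h0 : μ' B ≠ 0) (htop : μ' B ≠ ∞)
    (h : ∀ A, MeasurableSet A → μ (A ∩ B) / μ B = μ' (A ∩ B) / μ' B) :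
    μ'.restrict B = (μ' B / μ B) • μ.restrict B := by
  ext A hA
  rw [smul_apply, smul_eq_mul, restrict_apply hA, restrict_apply hA,
    ← ENNReal.div_mul_cancel h0 htop (a := μ' B) (b := μ' (A ∩ B)), ← h A hA]
  simp only [div_eq_mul_inv]
  ring

theorem restrict_eq_smul_restrict_of_subset {c : ℝ≥0∞} (hDE : D ⊆ E)
    (h : μ'.restrict E = c • μ.restrict E) : μ'.restrict D = c • μ.restrict D := by
  rw [← restrict_restrict_of_subset hDE, h, restrict_smul, restrict_restrict_of_subset hDE]

theorem eq_of_smul_restrict_eq_smul_restrict {c c' : ℝ≥0∞} (h0 : μ D ≠ 0) (htop : μ D ≠ ∞)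
    (h : c • μ.restrict D = c' • μ.restrict D) : c = c' := by
  have := congr($h Set.univ)
  simp only [smul_apply, restrict_apply_univ, smul_eq_mul] at this
  exact (ENNReal.mul_left_inj h0 htop).1 this

end MeasureTheory.Measure

open Measure

theorem stmt_13_general {X : Type*} [MeasurableSpace X] (𝔅 : Set (Set X))
    (h_union : ∀ B₁ ∈ 𝔅, ∀ B₂ ∈ 𝔅, B₁ ∪ B₂ ∈ 𝔅)
    (h_cover : ∃ B : ℕ → Set X, (∀ i, B i ∈ 𝔅) ∧ (⋃ i, B i) = Set.univ)
    (μ μ' : Measure X)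
    (hadm : ∀ B ∈ 𝔅, (0 < μ B ∧ μ B < ⊤) ∧ (0 < μ' B ∧ μ' B < ⊤))
    (hcond : ∀ B ∈ 𝔅, ∀ A : Set X, MeasurableSet A →
      μ (A ∩ B) / μ B = μ' (A ∩ B) / μ' B) :
    ∃ c : ℝ≥0∞, 0 < c ∧ c < ⊤ ∧ μ' = c • μ := by
  obtain ⟨B, hB𝔅, hB⟩ := h_cover
  have hratio : ∀ D ∈ 𝔅, μ'.restrict D = (μ' D / μ D) • μ.restrict D := fun D hD =>
    restrict_eq_smul_restrict_of_div_eq (hadm D hD).2.1.ne' (hadm D hD).2.2.ne (hcond D hD)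
  obtain ⟨⟨hμ₀, hμ₀_top⟩, hμ'₀, hμ'₀_top⟩ := hadm (B 0) (hB𝔅 0)
  set c := μ' (B 0) / μ (B 0)
  have hconst : ∀ D ∈ 𝔅, μ'.restrict D = c • μ.restrict D := by
    intro D hD
    have hE := hratio _ (h_union D hD _ (hB𝔅 0))
    have hc : μ' (D ∪ B 0) / μ (D ∪ B 0) = c :=
      eq_of_smul_restrict_eq_smul_restrict hμ₀.ne' hμ₀_top.ne <| by
        rw [← restrict_eq_smul_restrict_of_subset Set.subset_union_right hE, ← hratio _ (hB𝔅 0)]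
    rw [← hc]
    exact restrict_eq_smul_restrict_of_subset Set.subset_union_left hE
  refine ⟨c, ENNReal.div_pos hμ'₀.ne' hμ₀_top.ne, ENNReal.div_lt_top hμ'₀_top.ne hμ₀.ne', ?_⟩
  rw [ext_iff_of_iUnion_eq_univ hB]
  intro i
  rw [restrict_smul]
  exact hconst _ (hB𝔅 i)

/-- Structure theorem, uniqueness: if `𝔅` is a bunch (a family
of measurable sets closed under binary unions, covering `X` by a countable
subfamily, and not containing `∅`), and `μ, μ'` are σ-finite measures for
which every `B ∈ 𝔅` is admissible and which have the same elementary
conditional probabilities given each `B ∈ 𝔅`, then `μ' = c • μ` for some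
`c ∈ (0,∞)`. -/
theorem stmt_13 {X : Type*} [MeasurableSpace X] (𝔅 : Set (Set X))
    (h_meas : ∀ B ∈ 𝔅, MeasurableSet B)
    (h_union : ∀ B₁ ∈ 𝔅, ∀ B₂ ∈ 𝔅, B₁ ∪ B₂ ∈ 𝔅)
    (h_cover : ∃ B : ℕ → Set X, (∀ i, B i ∈ 𝔅) ∧ (⋃ i, B i) = Set.univ)
    (h_empty : ∅ ∉ 𝔅)
    (μ μ' : Measure X) (hμ : SigmaFinite μ) (hμ' : SigmaFinite μ')
    (hadm : ∀ B ∈ 𝔅, (0 < μ B ∧ μ B < ⊤) ∧ (0 < μ' B ∧ μ' B < ⊤))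
    (hcond : ∀ B ∈ 𝔅, ∀ A : Set X, MeasurableSet A →
      μ (A ∩ B) / μ B = μ' (A ∩ B) / μ' B) :
    ∃ c : ℝ≥0∞, 0 < c ∧ c < ⊤ ∧ μ' = c • μ :=
  stmt_13_general 𝔅 h_union h_cover μ μ' hadm hcond
end

section
/- (Maximality of the generated Renyi space.) Let μ be a nonzero σ-finite measure on (X, F) and let 𝔄 = {A ∈ F : 0 < μ(A) < ∞}. Suppose (X, F, 𝔅, ν) is a Renyi space with 𝔄 ⊆ 𝔅 and ν(A | B) = μ(A ∩ B)/μ(B) for all B ∈ 𝔄 and A ∈ F. Then every B ∈ 𝔅 satisfies 0 < μ(B) < ∞ and ν(A | B) = μ(A ∩ B)/μ(B) for all A ∈ F; in particular 𝔅 = 𝔄, so the Renyi space of elementary conditional probabilities of μ admits no strict extension. -/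
/-!
If some `B` in the bunch had `μ B = 0`, then `B ⊆ B ∪ E` for an admissible `E` would force
`ν(B | B ∪ E) = μ B / μ (B ∪ E) = 0`, against the Renyi positivity axiom. If `μ B = ∞`, fix an
admissible `C ⊆ B`, so `k = ν(C | B) > 0`. For every admissible `D` with `C ⊆ D ⊆ B` the Renyi axiom
gives `μ C / μ D = ν(C | D) = ν(C | B) / ν(D | B) ≥ k`, i.e. `μ D ≤ μ C / k`; but by σ-finiteness
such `D` of arbitrarily large measure exist.
-/

open MeasureTheory
open scoped ENNReal

namespace MeasureTheory.Measure

variable {X : Type*} [MeasurableSpace X]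

def admissibleSets (μ : Measure X) : Set (Set X) :=
  {A | MeasurableSet A ∧ 0 < μ A ∧ μ A < ⊤}

theorem exists_mem_admissibleSets_subset {μ : Measure X} [SigmaFinite μ] {s : Set X}
    {r : ℝ≥0∞} (hs : MeasurableSet s) (hr : r < μ s) :
    ∃ t ∈ μ.admissibleSets, t ⊆ s ∧ r < μ t := by
  obtain ⟨t, ht, hts, hrt, ht_top⟩ := exists_subset_measure_lt_top hs hr
  exact ⟨t, ⟨ht, pos_of_gt hrt, ht_top⟩, hts, hrt⟩

theorem union_mem_admissibleSets {μ : Measure X} {s t : Set X} (hs : s ∈ μ.admissibleSets)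
    (ht : MeasurableSet t) (ht_top : μ t < ⊤) : s ∪ t ∈ μ.admissibleSets :=
  ⟨hs.1.union ht, hs.2.1.trans_le (measure_mono Set.subset_union_left),
    (measure_union_le s t).trans_lt (ENNReal.add_lt_top.mpr ⟨hs.2.2, ht_top⟩)⟩

end MeasureTheory.Measure

namespace RenyiSpace

variable {X : Type*} [MeasurableSpace X] (R : RenyiSpace X)

theorem cond_le_one {B : Set X} (hB : B ∈ R.bunch) (A : Set X) : R.cond B A ≤ 1 :=
  have := R.isProbabilityMeasure B hB
  prob_le_one

theorem cond_le_cond_of_subset {B₁ B₂ B : Set X} (hB₁ : B₁ ∈ R.bunch) (hB₂ : B₂ ∈ R.bunch)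
    (hB : B ∈ R.bunch) (h₁₂ : B₁ ⊆ B₂) (h₂ : B₂ ⊆ B) : R.cond B B₁ ≤ R.cond B₂ B₁ := by
  rw [R.renyi B₂ hB₂ B hB h₂ B₁ (R.bunch_measurableSet B₁ hB₁),
    Set.inter_eq_self_of_subset_left h₁₂]
  simpa using ENNReal.div_le_div_left (R.cond_le_one hB B₂) (R.cond B B₁)

def ExtendsMeasure (μ : Measure X) : Prop :=
  μ.admissibleSets ⊆ R.bunch ∧
    ∀ B ∈ μ.admissibleSets, ∀ A, MeasurableSet A → R.cond B A = μ (A ∩ B) / μ B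

namespace ExtendsMeasure

variable {R} {μ : Measure X}

theorem measure_pos (hR : R.ExtendsMeasure μ) {B E : Set X} (hB : B ∈ R.bunch)
    (hE : E ∈ μ.admissibleSets) : 0 < μ B := by
  refine pos_iff_ne_zero.mpr fun hB0 => ?_
  have hBE : E ∪ B ∈ μ.admissibleSets :=
    Measure.union_mem_admissibleSets hE (R.bunch_measurableSet B hB) (by simp [hB0])
  have hpos := R.pos B hB _ (hR.1 hBE) Set.subset_union_right
  rw [hR.2 _ hBE B (R.bunch_measurableSet B hB),
    Set.inter_eq_self_of_subset_left Set.subset_union_right, hB0, ENNReal.zero_div] at hpos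
  exact hpos.ne rfl

theorem cond_mul_measure_le (hR : R.ExtendsMeasure μ) {B C D : Set X} (hB : B ∈ R.bunch)
    (hC : C ∈ μ.admissibleSets) (hD : D ∈ μ.admissibleSets) (hCD : C ⊆ D) (hDB : D ⊆ B) :
    R.cond B C * μ D ≤ μ C := by
  have hle := R.cond_le_cond_of_subset (hR.1 hC) (hR.1 hD) hB hCD hDB
  rwa [hR.2 D hD C hC.1, Set.inter_eq_self_of_subset_left hCD,
    ENNReal.le_div_iff_mul_le (Or.inl hD.2.1.ne') (Or.inl hD.2.2.ne)] at hle

theorem measure_lt_top [SigmaFinite μ] (hR : R.ExtendsMeasure μ) {B : Set X}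
    (hB : B ∈ R.bunch) (hB_pos : 0 < μ B) : μ B < ⊤ := by
  have hBm := R.bunch_measurableSet B hB
  obtain ⟨C, hC, hCB, -⟩ := Measure.exists_mem_admissibleSets_subset hBm hB_pos
  have hk : R.cond B C ≠ 0 := (R.pos C (hR.1 hC) B hB hCB).ne'
  refine lt_top_iff_ne_top.mpr fun hB_top => ?_
  have hbound : μ C / R.cond B C < μ B :=
    hB_top ▸ ENNReal.div_lt_top hC.2.2.ne hk
  obtain ⟨t, ht, htB, hlt⟩ := Measure.exists_mem_admissibleSets_subset hBm hbound
  have hD := Measure.union_mem_admissibleSets hC ht.1 ht.2.2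
  have hle := hR.cond_mul_measure_le hB hC hD Set.subset_union_left (Set.union_subset hCB htB)
  rw [mul_comm, ← ENNReal.le_div_iff_mul_le (Or.inl hk)
    (Or.inl (ne_top_of_le_ne_top ENNReal.one_ne_top (R.cond_le_one hB C)))] at hle
  exact (hlt.trans_le ((measure_mono Set.subset_union_right).trans hle)).false

end ExtendsMeasure

end RenyiSpace

/-- Maximality of the generated Renyi space: if a Renyi space
extends the Renyi space of elementary conditional probabilities of a nonzero
σ-finite measure `μ` on its full family `𝔄` of admissible sets, then every
bunch member is admissible for `μ` with the elementary conditional law of `μ`;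
in particular its bunch equals `𝔄`, so no strict extension exists. -/
theorem stmt_14 {X : Type*} [MeasurableSpace X] (μ : Measure X)
    (hμ : μ ≠ 0) (hsf : SigmaFinite μ) (R : RenyiSpace X)
    (hsub : {A : Set X | MeasurableSet A ∧ 0 < μ A ∧ μ A < ⊤} ⊆ R.bunch)
    (hext : ∀ B ∈ {A : Set X | MeasurableSet A ∧ 0 < μ A ∧ μ A < ⊤},
      ∀ A : Set X, MeasurableSet A → R.cond B A = μ (A ∩ B) / μ B) :
    (∀ B ∈ R.bunch, (0 < μ B ∧ μ B < ⊤) ∧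
      ∀ A : Set X, MeasurableSet A → R.cond B A = μ (A ∩ B) / μ B) ∧
    R.bunch = {A : Set X | MeasurableSet A ∧ 0 < μ A ∧ μ A < ⊤} := by
  have hR : R.ExtendsMeasure μ := ⟨hsub, hext⟩
  obtain ⟨E, hE, -⟩ :=
    Measure.exists_mem_admissibleSets_subset MeasurableSet.univ (Measure.measure_univ_pos.mpr hμ)
  have hadm : R.bunch ⊆ μ.admissibleSets := fun B hB =>
    have hB_pos := hR.measure_pos hB hE
    ⟨R.bunch_measurableSet B hB, hB_pos, hR.measure_lt_top hB hB_pos⟩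
  exact ⟨fun B hB => ⟨(hadm hB).2, hext B (hadm hB)⟩, hadm.antisymm hsub⟩
end

section
/- (Injectivity of the correspondence between maximal Renyi spaces and conditional measure spaces.) Let μ and ν be nonzero σ-finite measures on a measurable space (X, F) such that {A ∈ F : 0 < μ(A) < ∞} = {A ∈ F : 0 < ν(A) < ∞} and, for every A in this common family and every measurable B, μ(B ∩ A)/μ(A) = ν(B ∩ A)/ν(A). Then ν = c·μ for some c ∈ (0,∞); i.e., two σ-finite measures with the same admissible sets and the same elementary conditional probabilities determine the same conditional measure. -/
open MeasureTheory Set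
open scoped ENNReal

/-! Conditioning on a `μ`-admissible set `U` itself forces `0 < ν U < ∞`, and conditioning on a
measurable `B ⊆ U` then gives `ν B = (ν U / μ U) · μ B`. Fix an admissible `A₀` and put
`c = ν A₀ / μ A₀`. If `μ E < ∞` then `E ∪ A₀` is admissible; taking `B = A₀` identifies its ratio
`ν (E ∪ A₀) / μ (E ∪ A₀)` with `c`, and taking `B = E` gives `ν E = c · μ E`. As `μ` is σ-finite,
agreement on sets of finite `μ`-measure yields `ν = c • μ`. -/

lemma ENNReal.ne_zero_and_ne_top_of_div_self_eq_one {a : ℝ≥0∞} (h : a / a = 1) :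
    a ≠ 0 ∧ a ≠ ∞ := by
  constructor <;> rintro rfl <;> simp at h

section CondEq

variable {X : Type*} [MeasurableSpace X] {μ ν : Measure X} {U : Set X}

lemma ne_zero_and_ne_top_of_cond_eq (hU : MeasurableSet U) (hμU₀ : μ U ≠ 0) (hμU : μ U ≠ ∞)
    (hcond : ∀ B, MeasurableSet B → μ (B ∩ U) / μ U = ν (B ∩ U) / ν U) :
    ν U ≠ 0 ∧ ν U ≠ ∞ := by
  apply ENNReal.ne_zero_and_ne_top_of_div_self_eq_one
  simpa [ENNReal.div_self hμU₀ hμU] using (hcond U hU).symm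

lemma measure_eq_div_mul_of_cond_eq (hU : MeasurableSet U) (hμU₀ : μ U ≠ 0) (hμU : μ U ≠ ∞)
    (hcond : ∀ B, MeasurableSet B → μ (B ∩ U) / μ U = ν (B ∩ U) / ν U)
    {B : Set X} (hB : MeasurableSet B) (hBU : B ⊆ U) :
    ν B = ν U / μ U * μ B := by
  obtain ⟨hνU₀, hνU⟩ := ne_zero_and_ne_top_of_cond_eq hU hμU₀ hμU hcond
  have h := hcond B hB
  rw [inter_eq_left.2 hBU] at h
  calc ν B = ν B / ν U * ν U := (ENNReal.div_mul_cancel hνU₀ hνU).symm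
    _ = μ B / μ U * ν U := by rw [h]
    _ = ν U / μ U * μ B := by simp only [div_eq_mul_inv]; ring

lemma eq_smul_of_cond_eq [SigmaFinite μ] {A₀ : Set X} (hA₀ : MeasurableSet A₀)
    (hμA₀₀ : μ A₀ ≠ 0) (hμA₀ : μ A₀ ≠ ∞)
    (hcond : ∀ U, MeasurableSet U → μ U ≠ 0 → μ U ≠ ∞ →
      ∀ B, MeasurableSet B → μ (B ∩ U) / μ U = ν (B ∩ U) / ν U) :
    ν = (ν A₀ / μ A₀) • μ := by
  have eq_on_finite : ∀ E, MeasurableSet E → μ E ≠ ∞ → ν E = ν A₀ / μ A₀ * μ E := by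
    intro E hE hμE
    have hV : MeasurableSet (E ∪ A₀) := hE.union hA₀
    have hμV₀ : μ (E ∪ A₀) ≠ 0 := (measure_mono_null subset_union_right).mt hμA₀₀
    have hμV : μ (E ∪ A₀) ≠ ∞ := measure_union_ne_top hμE hμA₀
    have hcondV := hcond _ hV hμV₀ hμV
    have hratio : ν A₀ / μ A₀ = ν (E ∪ A₀) / μ (E ∪ A₀) := by
      rw [measure_eq_div_mul_of_cond_eq hV hμV₀ hμV hcondV hA₀ subset_union_right,
        ENNReal.mul_div_cancel_right hμA₀₀ hμA₀]
    rw [hratio]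
    exact measure_eq_div_mul_of_cond_eq hV hμV₀ hμV hcondV hE subset_union_left
  refine Measure.ext_of_iUnion_eq_univ (iUnion_spanningSets μ) fun n => ?_
  ext t ht
  rw [Measure.restrict_apply ht, Measure.restrict_apply ht, Measure.smul_apply, smul_eq_mul]
  exact eq_on_finite _ (ht.inter (measurableSet_spanningSets μ n))
    (measure_lt_top_of_subset inter_subset_right (measure_spanningSets_lt_top μ n).ne).ne

end CondEq

theorem stmt_15_general {X : Type*} [MeasurableSpace X] (μ ν : Measure X)
    (hμ0 : μ ≠ 0) (hμ : SigmaFinite μ)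
    (hcond : ∀ A ∈ {A : Set X | MeasurableSet A ∧ 0 < μ A ∧ μ A < ⊤},
      ∀ B : Set X, MeasurableSet B → μ (B ∩ A) / μ A = ν (B ∩ A) / ν A) :
    ∃ c : ℝ≥0∞, 0 < c ∧ c < ⊤ ∧ ν = c • μ := by
  obtain ⟨A₀, hA₀, -, hμA₀₀, hμA₀⟩ := μ.exists_subset_measure_lt_top MeasurableSet.univ
    (pos_iff_ne_zero.2 (Measure.measure_univ_ne_zero.2 hμ0))
  have hcond' : ∀ U, MeasurableSet U → μ U ≠ 0 → μ U ≠ ∞ →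
      ∀ B, MeasurableSet B → μ (B ∩ U) / μ U = ν (B ∩ U) / ν U :=
    fun U hU hμU₀ hμU => hcond U ⟨hU, pos_iff_ne_zero.2 hμU₀, hμU.lt_top⟩
  obtain ⟨hνA₀₀, hνA₀⟩ :=
    ne_zero_and_ne_top_of_cond_eq hA₀ hμA₀₀.ne' hμA₀.ne (hcond' A₀ hA₀ hμA₀₀.ne' hμA₀.ne)
  exact ⟨ν A₀ / μ A₀, ENNReal.div_pos hνA₀₀ hμA₀.ne, ENNReal.div_lt_top hνA₀ hμA₀₀.ne',
    eq_smul_of_cond_eq hA₀ hμA₀₀.ne' hμA₀.ne hcond'⟩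

/-- Injectivity of the correspondence between maximal Renyi
spaces and conditional measure spaces: two nonzero σ-finite measures with the
same admissible sets and the same elementary conditional probabilities are
positive scalar multiples of each other, i.e. they determine the same
conditional measure. -/
theorem stmt_15 {X : Type*} [MeasurableSpace X] (μ ν : Measure X)
    (hμ0 : μ ≠ 0) (hν0 : ν ≠ 0) (hμ : SigmaFinite μ) (hν : SigmaFinite ν)
    (hadm : {A : Set X | MeasurableSet A ∧ 0 < μ A ∧ μ A < ⊤} =
            {A : Set X | MeasurableSet A ∧ 0 < ν A ∧ ν A < ⊤})
    (hcond : ∀ A ∈ {A : Set X | MeasurableSet A ∧ 0 < μ A ∧ μ A < ⊤},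
      ∀ B : Set X, MeasurableSet B → μ (B ∩ A) / μ A = ν (B ∩ A) / ν A) :
    ∃ c : ℝ≥0∞, 0 < c ∧ c < ⊤ ∧ ν = c • μ :=
  stmt_15_general μ ν hμ0 hμ hcond
end

section
/- Let 𝔅 denote the family of all finite nonempty unions of open intervals of the form (m/2, 1 + m/2) with m ∈ ℤ. If μ is a σ-finite measure on the real line with its Borel σ-field such that every B ∈ 𝔅 satisfies 0 < μ(B) < ∞ and μ(A ∩ B)/μ(B) = λ(A ∩ B)/λ(B) for all Borel sets A and all B ∈ 𝔅, where λ is Lebesgue measure, then μ = c·λ for some c ∈ (0,∞). Hence the Renyi space of uniform conditional laws on 𝔅 generates the conditional measure given by the equivalence class of Lebesgue measure. -/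
open MeasureTheory
open scoped ENNReal

/-- The bunch of finite nonempty unions of intervals `(m/2, 1 + m/2)`, `m ∈ ℤ`. -/
def halfIntervalBunch : Set (Set ℝ) :=
  {B : Set ℝ | ∃ S : Finset ℤ, S.Nonempty ∧
    B = ⋃ m ∈ S, Set.Ioo ((m : ℝ) / 2) (1 + (m : ℝ) / 2)}

/-!
Proof idea: conditioning on `I m ∪ I (m+1)`, where `I m = (m/2, 1 + m/2)`, shows that the two
overlapping unit intervals have the same `μ`-measure, so `μ (I m) = c` for all `m`. Conditioning on
`I m` alone then gives `μ = c • λ` on each `I m`, and the intervals `I m` cover `ℝ`.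
-/

namespace MeasureTheory.Measure

theorem restrict_eq_smul_restrict_of_div_eq_s16 {α : Type*} [MeasurableSpace α] {μ ν : Measure α}
    {B : Set α} (hμB₀ : μ B ≠ 0) (hμB : μ B ≠ ∞)
    (h : ∀ A, MeasurableSet A → μ (A ∩ B) / μ B = ν (A ∩ B) / ν B) :
    μ.restrict B = (μ B / ν B) • ν.restrict B := by
  ext A hA
  rw [Measure.smul_apply, restrict_apply hA, restrict_apply hA, smul_eq_mul,
    ← ENNReal.div_mul_cancel hμB₀ hμB (b := μ (A ∩ B)), h A hA]
  simp only [div_eq_mul_inv]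
  ring

end MeasureTheory.Measure

open Measure Set

def halfInterval (m : ℤ) : Set ℝ := Ioo ((m : ℝ) / 2) (1 + (m : ℝ) / 2)

theorem volume_halfInterval (m : ℤ) : volume (halfInterval m) = 1 := by
  simp [halfInterval, Real.volume_Ioo]

theorem iUnion_halfInterval : ⋃ m : ℤ, halfInterval m = univ := by
  refine eq_univ_of_forall fun x => mem_iUnion.2 ⟨⌈2 * x⌉ - 1, ?_, ?_⟩
  · have := Int.ceil_lt_add_one (2 * x)
    push_cast
    linarith
  · have := Int.le_ceil (2 * x)
    push_cast
    linarith

theorem biUnion_halfInterval_mem {S : Finset ℤ} (hS : S.Nonempty) :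
    ⋃ m ∈ S, halfInterval m ∈ halfIntervalBunch :=
  ⟨S, hS, rfl⟩

theorem halfInterval_mem (m : ℤ) : halfInterval m ∈ halfIntervalBunch := by
  simpa using biUnion_halfInterval_mem (Finset.singleton_nonempty m)

theorem halfInterval_union_succ_mem (m : ℤ) :
    halfInterval m ∪ halfInterval (m + 1) ∈ halfIntervalBunch := by
  simpa [Finset.set_biUnion_insert] using
    biUnion_halfInterval_mem (Finset.insert_nonempty m {m + 1})

def HasUniformConditionals (μ : Measure ℝ) : Prop :=
  ∀ B ∈ halfIntervalBunch, (0 < μ B ∧ μ B < ⊤) ∧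
    ∀ A : Set ℝ, MeasurableSet A → μ (A ∩ B) / μ B = volume (A ∩ B) / volume B

namespace HasUniformConditionals

variable {μ : Measure ℝ}

theorem restrict_eq_smul_restrict_volume (h : HasUniformConditionals μ) {B : Set ℝ}
    (hB : B ∈ halfIntervalBunch) :
    μ.restrict B = (μ B / volume B) • volume.restrict B :=
  restrict_eq_smul_restrict_of_div_eq_s16 (h B hB).1.1.ne' (h B hB).1.2.ne (h B hB).2

theorem measure_halfInterval_of_subset (h : HasUniformConditionals μ) {B : Set ℝ}
    (hB : B ∈ halfIntervalBunch) {m : ℤ} (hmB : halfInterval m ⊆ B) :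
    μ (halfInterval m) = μ B / volume B := by
  rw [← restrict_eq_self μ hmB, h.restrict_eq_smul_restrict_volume hB, Measure.smul_apply,
    restrict_eq_self _ hmB, volume_halfInterval, smul_eq_mul, mul_one]

theorem measure_halfInterval (h : HasUniformConditionals μ) (m : ℤ) :
    μ (halfInterval m) = μ (halfInterval 0) := by
  have hper : Function.Periodic (fun n : ℤ => μ (halfInterval n)) 1 := fun n => by
    have hB := halfInterval_union_succ_mem n
    dsimp only
    rw [h.measure_halfInterval_of_subset hB subset_union_right,
      h.measure_halfInterval_of_subset hB subset_union_left]
  simpa using hper.int_mul_eq m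

end HasUniformConditionals

theorem stmt_16_general (μ : Measure ℝ)
    (h : ∀ B ∈ halfIntervalBunch, (0 < μ B ∧ μ B < ⊤) ∧
      ∀ A : Set ℝ, MeasurableSet A →
        μ (A ∩ B) / μ B = volume (A ∩ B) / volume B) :
    ∃ c : ℝ≥0∞, 0 < c ∧ c < ⊤ ∧ μ = c • volume := by
  have hμ : HasUniformConditionals μ := h
  obtain ⟨hc₀, hc⟩ := (h _ (halfInterval_mem 0)).1
  refine ⟨μ (halfInterval 0), hc₀, hc, ext_of_iUnion_eq_univ iUnion_halfInterval fun m => ?_⟩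
  rw [hμ.restrict_eq_smul_restrict_volume (halfInterval_mem m), volume_halfInterval,
    hμ.measure_halfInterval, div_one, restrict_smul]

/-- If a σ-finite Borel measure `μ` on `ℝ` makes every member of
the bunch `𝔅` of finite nonempty unions of intervals `(m/2, 1 + m/2)`
admissible and has the uniform (Lebesgue) conditional laws on `𝔅`, then
`μ = c • λ` for some `c ∈ (0,∞)`: the Renyi space of uniform conditional laws
on `𝔅` generates the conditional measure given by the equivalence class of
Lebesgue measure. -/
theorem stmt_16 (μ : Measure ℝ) (hsf : SigmaFinite μ)
    (h : ∀ B ∈ halfIntervalBunch, (0 < μ B ∧ μ B < ⊤) ∧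
      ∀ A : Set ℝ, MeasurableSet A →
        μ (A ∩ B) / μ B = volume (A ∩ B) / volume B) :
    ∃ c : ℝ≥0∞, 0 < c ∧ c < ⊤ ∧ μ = c • volume :=
  stmt_16_general μ h
end
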